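/- arXiv:2401.02925 — 3 statements merged into one kernel-verified Lean document; each statement's English description precedes it below -/
import Mathlib

section
/- Let (H, B, φ) be a Hopf bracoid over a field K such that φ is a coalgebra morphism. Then (B, Φ) is a left H-module algebra; that is, for all h, h' ∈ H and b, b' ∈ B: Φ(1_H ⊗ b) = b, Φ(h ⊗ Φ(h' ⊗ b)) = Φ(h h' ⊗ b), Φ(h ⊗ 1_B) = ε_H(h) 1_B, and Φ(h ⊗ b b') = Σ Φ(h₍₁₎ ⊗ b) · Φ(h₍₂₎ ⊗ b'). -/
open TensorProduct LinearMap

noncomputable section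

namespace HopfBracoidPaper

variable (K : Type*) [Field K]
variable (H B : Type*) [Ring H] [Ring B] [HopfAlgebra K H] [HopfAlgebra K B]

/-- `u(h) = φ(h ⊗ 1_B)`. -/
def uMap (φ : H ⊗[K] B →ₗ[K] B) : H →ₗ[K] B :=
  φ ∘ₗ (TensorProduct.mk K H B).flip 1

/-- `Φ(h ⊗ b) = Σ S_B(u(h₍₁₎)) · φ(h₍₂₎ ⊗ b)`. -/
def PhiMap (φ : H ⊗[K] B →ₗ[K] B) : H ⊗[K] B →ₗ[K] B :=
  LinearMap.mul' K B
    ∘ₗ TensorProduct.map (HopfAlgebra.antipode (R := K) ∘ₗ uMap K H B φ) φ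
    ∘ₗ (TensorProduct.assoc K H H B).toLinearMap
    ∘ₗ LinearMap.rTensor B (Coalgebra.comul (R := K))

/-- `(B, φ)` is a left `H`-module. -/
structure IsModuleAction (φ : H ⊗[K] B →ₗ[K] B) : Prop where
  one_act : ∀ b : B, φ ((1 : H) ⊗ₜ[K] b) = b
  mul_act : ∀ (h h' : H) (b : B), φ ((h * h') ⊗ₜ[K] b) = φ (h ⊗ₜ[K] φ (h' ⊗ₜ[K] b))

/-- `(H, B, φ)` is a Hopf bracoid: `(B, φ)` is a left `H`-module and
`φ(h ⊗ b·b') = Σ φ(h₍₁₎ ⊗ b) · Φ(h₍₂₎ ⊗ b')`. -/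
structure IsHopfBracoid (φ : H ⊗[K] B →ₗ[K] B) : Prop where
  one_act : ∀ b : B, φ ((1 : H) ⊗ₜ[K] b) = b
  mul_act : ∀ (h h' : H) (b : B), φ ((h * h') ⊗ₜ[K] b) = φ (h ⊗ₜ[K] φ (h' ⊗ₜ[K] b))
  compat : ∀ (h : H) (b b' : B),
    φ (h ⊗ₜ[K] (b * b')) =
      (LinearMap.mul' K B
        ∘ₗ TensorProduct.map φ (PhiMap K H B φ)
        ∘ₗ (TensorProduct.tensorTensorTensorComm K H H B B).toLinearMap)
        ((Coalgebra.comul (R := K) h) ⊗ₜ[K] (b ⊗ₜ[K] b'))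

/-- `φ : H ⊗ B → B` is a coalgebra morphism:
`ε_B(φ(h ⊗ b)) = ε_H(h) ε_B(b)` and
`δ_B(φ(h ⊗ b)) = Σ φ(h₍₁₎ ⊗ b₍₁₎) ⊗ φ(h₍₂₎ ⊗ b₍₂₎)`. -/
structure IsCoalgebraMorphism (φ : H ⊗[K] B →ₗ[K] B) : Prop where
  counit_comp : ∀ (h : H) (b : B),
    Coalgebra.counit (R := K) (φ (h ⊗ₜ[K] b)) =
      Coalgebra.counit (R := K) h * Coalgebra.counit (R := K) b
  comul_comp : ∀ (h : H) (b : B),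
    Coalgebra.comul (R := K) (φ (h ⊗ₜ[K] b)) =
      (TensorProduct.map φ φ)
        ((TensorProduct.tensorTensorTensorComm K H H B B)
          ((Coalgebra.comul (R := K) h) ⊗ₜ[K] (Coalgebra.comul (R := K) b)))

/-- `(B, ψ)` is a left `H`-module algebra. -/
structure IsModuleAlgebra (ψ : H ⊗[K] B →ₗ[K] B) : Prop where
  one_act : ∀ b : B, ψ ((1 : H) ⊗ₜ[K] b) = b
  mul_act : ∀ (h h' : H) (b : B), ψ ((h * h') ⊗ₜ[K] b) = ψ (h ⊗ₜ[K] ψ (h' ⊗ₜ[K] b))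
  act_one : ∀ h : H, ψ (h ⊗ₜ[K] (1 : B)) = Coalgebra.counit (R := K) h • (1 : B)
  act_mul : ∀ (h : H) (b b' : B),
    ψ (h ⊗ₜ[K] (b * b')) =
      (LinearMap.mul' K B
        ∘ₗ TensorProduct.map ψ ψ
        ∘ₗ (TensorProduct.tensorTensorTensorComm K H H B B).toLinearMap)
        ((Coalgebra.comul (R := K) h) ⊗ₜ[K] (b ⊗ₜ[K] b'))

/-- `π : H → B` is a 1-cocycle with action `γ`. -/
structure IsOneCocycle (π : H →ₗ[K] B) (γ : H ⊗[K] B →ₗ[K] B) : Prop where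
  moduleAlgebra : IsModuleAlgebra K H B γ
  counit_comp : ∀ h : H, Coalgebra.counit (R := K) (π h) = Coalgebra.counit (R := K) h
  comul_comp : ∀ h : H,
    Coalgebra.comul (R := K) (π h) = (TensorProduct.map π π) (Coalgebra.comul (R := K) h)
  cocycle : ∀ h g : H,
    π (h * g) =
      (LinearMap.mul' K B
        ∘ₗ TensorProduct.map π γ
        ∘ₗ (TensorProduct.assoc K H H B).toLinearMap)
        ((Coalgebra.comul (R := K) h) ⊗ₜ[K] π g)


/-- `Φ'(h ⊗ b) = Σ φ(h₍₁₎ ⊗ b) · S_B(u(h₍₂₎))`. -/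
def PhiMap' (φ : H ⊗[K] B →ₗ[K] B) : H ⊗[K] B →ₗ[K] B :=
  LinearMap.mul' K B
    ∘ₗ TensorProduct.map φ (HopfAlgebra.antipode (R := K) ∘ₗ uMap K H B φ)
    ∘ₗ (TensorProduct.assoc K H B H).symm.toLinearMap
    ∘ₗ LinearMap.lTensor H (TensorProduct.comm K H B).toLinearMap
    ∘ₗ (TensorProduct.assoc K H H B).toLinearMap
    ∘ₗ LinearMap.rTensor B (Coalgebra.comul (R := K))

/-- `ψ(h ⊗ b) = Σ π(h₍₁₎) · γ(h₍₂₎ ⊗ b)`. -/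
def psiMap (π : H →ₗ[K] B) (γ : H ⊗[K] B →ₗ[K] B) : H ⊗[K] B →ₗ[K] B :=
  LinearMap.mul' K B
    ∘ₗ TensorProduct.map π γ
    ∘ₗ (TensorProduct.assoc K H H B).toLinearMap
    ∘ₗ LinearMap.rTensor B (Coalgebra.comul (R := K))

/-- `Σ ψ(h₍₂₎ ⊗ b) ⊗ h₍₁₎ = Σ ψ(h₍₁₎ ⊗ b) ⊗ h₍₂₎` in `B ⊗ H`. -/
def SatisfiesStarCondition (ψ : H ⊗[K] B →ₗ[K] B) : Prop :=
  ∀ (h : H) (b : B),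
    ((TensorProduct.comm K H B).toLinearMap ∘ₗ LinearMap.lTensor H ψ)
      ((TensorProduct.assoc K H H B) ((Coalgebra.comul (R := K) h) ⊗ₜ[K] b)) =
    ((TensorProduct.comm K H B).toLinearMap ∘ₗ LinearMap.lTensor H ψ)
      ((TensorProduct.assoc K H H B)
        (((TensorProduct.comm K H H) (Coalgebra.comul (R := K) h)) ⊗ₜ[K] b))

/-- A Hopf algebra is cocommutative if `c ∘ δ = δ`. -/
def IsCocommutative : Prop :=
  ∀ h : H, (TensorProduct.comm K H H) (Coalgebra.comul (R := K) h) = Coalgebra.comul (R := K) h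

/-- `x` is a group-like element: `δ(x) = x ⊗ x` and `ε(x) = 1`. -/
def IsGroupLike (x : B) : Prop :=
  Coalgebra.counit (R := K) x = 1 ∧ Coalgebra.comul (R := K) x = x ⊗ₜ[K] x

/-- `Φᵒᵖ(h ⊗ b) = Σ φ(h₍₂₎ ⊗ b) · S_B(u(h₍₁₎))`: the `Φ`-map of `φ` with respect to the
opposite multiplication of `B`. -/
def PhiOpMap (φ : H ⊗[K] B →ₗ[K] B) : H ⊗[K] B →ₗ[K] B :=
  LinearMap.mul' K B
    ∘ₗ (TensorProduct.comm K B B).toLinearMap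
    ∘ₗ TensorProduct.map (HopfAlgebra.antipode (R := K) ∘ₗ uMap K H B φ) φ
    ∘ₗ (TensorProduct.assoc K H H B).toLinearMap
    ∘ₗ LinearMap.rTensor B (Coalgebra.comul (R := K))


/-! ### Auxiliary lemmas for the proof of `statement3` -/

section Aux

open Coalgebra HopfAlgebra

variable {K} {H B}

set_option linter.unusedSectionVars false
set_option maxHeartbeats 1000000
set_option synthInstance.maxHeartbeats 400000

lemma uMap_apply (φ : H ⊗[K] B →ₗ[K] B) (x : H) :
    uMap K H B φ x = φ (x ⊗ₜ[K] 1) := rfl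

/-- Rearrangement of triple products along coassociativity. -/
lemma sum_tri (f g k : H →ₗ[K] B) {a : H} {ιr κ₁ κ₂ : Type*} (r : Coalgebra.Repr K a ιr)
    (a₁ : ∀ i : ιr, Coalgebra.Repr K (r.left i) κ₁)
    (a₂ : ∀ i : ιr, Coalgebra.Repr K (r.right i) κ₂) :
    ∑ i ∈ r.index, ∑ j ∈ (a₂ i).index,
      f (r.left i) * (g ((a₂ i).left j) * k ((a₂ i).right j)) =
    ∑ i ∈ r.index, ∑ j ∈ (a₁ i).index,
      f ((a₁ i).left j) * (g ((a₁ i).right j) * k (r.right i)) := by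
  have h0 := Coalgebra.sum_tmul_tmul_eq r a₁ a₂
  have h1 := congrArg
    (LinearMap.mul' K B ∘ₗ TensorProduct.map f (LinearMap.mul' K B ∘ₗ TensorProduct.map g k)) h0
  simpa [map_sum, LinearMap.mul'_apply] using h1.symm

lemma PhiMap_apply'' (φ : H ⊗[K] B →ₗ[K] B) (h : H) (b : B) {ι : Type*}
    (s : Finset ι) (x y : ι → H)
    (hh : Coalgebra.comul (R := K) h = ∑ i ∈ s, x i ⊗ₜ[K] y i) :
    PhiMap K H B φ (h ⊗ₜ[K] b) =
      ∑ i ∈ s, HopfAlgebra.antipode (R := K) (uMap K H B φ (x i)) * φ (y i ⊗ₜ[K] b) := by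
  rw [PhiMap]
  simp only [LinearMap.coe_comp, Function.comp_apply, LinearEquiv.coe_coe,
    LinearMap.rTensor_tmul, hh, TensorProduct.sum_tmul, map_sum,
    TensorProduct.assoc_tmul, TensorProduct.map_tmul, LinearMap.mul'_apply]

lemma PhiMap_repr (φ : H ⊗[K] B →ₗ[K] B) (h : H) (b : B) {ιr : Type*} (r : Coalgebra.Repr K h ιr) :
    PhiMap K H B φ (h ⊗ₜ[K] b) =
      ∑ i ∈ r.index,
        HopfAlgebra.antipode (R := K) (uMap K H B φ (r.left i)) * φ (r.right i ⊗ₜ[K] b) :=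
  PhiMap_apply'' φ h b r.index r.left r.right r.eq.symm

lemma map_mul'_apply (ψ₁ ψ₂ : H ⊗[K] B →ₗ[K] B) (h : H) (b b' : B)
    {ιr : Type*} (r : Coalgebra.Repr K h ιr) :
    (LinearMap.mul' K B
        ∘ₗ TensorProduct.map ψ₁ ψ₂
        ∘ₗ (TensorProduct.tensorTensorTensorComm K H H B B).toLinearMap)
        ((Coalgebra.comul (R := K) h) ⊗ₜ[K] (b ⊗ₜ[K] b')) =
      ∑ i ∈ r.index, ψ₁ (r.left i ⊗ₜ[K] b) * ψ₂ (r.right i ⊗ₜ[K] b') := by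
  rw [← r.eq]
  simp [TensorProduct.sum_tmul, map_sum, LinearMap.mul'_apply]

lemma compat' (φ : H ⊗[K] B →ₗ[K] B) (hbr : IsHopfBracoid K H B φ)
    (h : H) (b b' : B) {ιr : Type*} (r : Coalgebra.Repr K h ιr) :
    φ (h ⊗ₜ[K] (b * b')) =
      ∑ i ∈ r.index, φ (r.left i ⊗ₜ[K] b) * PhiMap K H B φ (r.right i ⊗ₜ[K] b') := by
  rw [hbr.compat, map_mul'_apply _ _ _ _ _ r]

lemma comul_one' : Coalgebra.comul (R := K) (1 : B) = (1 : B) ⊗ₜ[K] 1 := by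
  rw [Bialgebra.comul_one]; rfl

lemma counit_u (φ : H ⊗[K] B →ₗ[K] B) (hco : IsCoalgebraMorphism K H B φ) (x : H) :
    Coalgebra.counit (R := K) (uMap K H B φ x) = Coalgebra.counit (R := K) x := by
  have := hco.counit_comp x 1
  simpa [uMap_apply] using this

lemma comul_u (φ : H ⊗[K] B →ₗ[K] B) (hco : IsCoalgebraMorphism K H B φ)
    {x : H} {ιt : Type*} (t : Coalgebra.Repr K x ιt) :
    Coalgebra.comul (R := K) (uMap K H B φ x) =
      ∑ i ∈ t.index, uMap K H B φ (t.left i) ⊗ₜ[K] uMap K H B φ (t.right i) := by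
  have h0 := hco.comul_comp x 1
  rw [comul_one' (K := K) (B := B), ← t.eq] at h0
  rw [uMap_apply, h0]
  simp [TensorProduct.sum_tmul, map_sum, uMap_apply]

lemma sum_u_antipode (φ : H ⊗[K] B →ₗ[K] B) (hco : IsCoalgebraMorphism K H B φ)
    {x : H} {ιt : Type*} (t : Coalgebra.Repr K x ιt) :
    ∑ i ∈ t.index,
        uMap K H B φ (t.left i) * HopfAlgebra.antipode (R := K) (uMap K H B φ (t.right i)) =
      algebraMap K B (Coalgebra.counit (R := K) x) := by
  have h0 := HopfAlgebra.mul_antipode_lTensor_comul_apply (R := K) (uMap K H B φ x)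
  rw [comul_u φ hco t] at h0
  simpa [map_sum, LinearMap.mul'_apply, counit_u φ hco] using h0

lemma sum_antipode_u (φ : H ⊗[K] B →ₗ[K] B) (hco : IsCoalgebraMorphism K H B φ)
    {x : H} {ιt : Type*} (t : Coalgebra.Repr K x ιt) :
    ∑ i ∈ t.index,
        HopfAlgebra.antipode (R := K) (uMap K H B φ (t.left i)) * uMap K H B φ (t.right i) =
      algebraMap K B (Coalgebra.counit (R := K) x) := by
  have h0 := HopfAlgebra.mul_antipode_rTensor_comul_apply (R := K) (uMap K H B φ x)
  rw [comul_u φ hco t] at h0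
  simpa [map_sum, LinearMap.mul'_apply, counit_u φ hco] using h0

lemma comul_phi (φ : H ⊗[K] B →ₗ[K] B) (hco : IsCoalgebraMorphism K H B φ)
    (h : H) (b : B) {ιr : Type*} (r : Coalgebra.Repr K h ιr) {ι' : Type*} (s : Finset ι') (y z : ι' → B)
    (hb : Coalgebra.comul (R := K) b = ∑ j ∈ s, y j ⊗ₜ[K] z j) :
    Coalgebra.comul (R := K) (φ (h ⊗ₜ[K] b)) =
      ∑ i ∈ r.index, ∑ j ∈ s, φ (r.left i ⊗ₜ[K] y j) ⊗ₜ[K] φ (r.right i ⊗ₜ[K] z j) := by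
  rw [hco.comul_comp, hb, ← r.eq]
  simp only [TensorProduct.sum_tmul, TensorProduct.tmul_sum, map_sum,
    TensorProduct.tensorTensorTensorComm_tmul, TensorProduct.map_tmul]
  exact Finset.sum_comm ..

/-- The "double" antipode collapse: `Σ S(φ(x₁ ⊗ u(x'₁))) φ(x₂ ⊗ u(x'₂)) = ε(x) ε(x') 1`. -/
lemma lemC (φ : H ⊗[K] B →ₗ[K] B) (hco : IsCoalgebraMorphism K H B φ)
    {x x' : H} {ιt ιt' : Type*} (t : Coalgebra.Repr K x ιt) (t' : Coalgebra.Repr K x' ιt') :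
    ∑ p ∈ t.index, ∑ q ∈ t'.index,
        HopfAlgebra.antipode (R := K) (φ (t.left p ⊗ₜ[K] uMap K H B φ (t'.left q))) *
          φ (t.right p ⊗ₜ[K] uMap K H B φ (t'.right q)) =
      algebraMap K B (Coalgebra.counit (R := K) x * Coalgebra.counit (R := K) x') := by
  have h0 := HopfAlgebra.mul_antipode_rTensor_comul_apply (R := K)
    (φ (x ⊗ₜ[K] uMap K H B φ x'))
  rw [comul_phi φ hco x (uMap K H B φ x') t t'.index
    (fun q => uMap K H B φ (t'.left q)) (fun q => uMap K H B φ (t'.right q))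
    (comul_u φ hco t')] at h0
  rw [hco.counit_comp, counit_u φ hco] at h0
  simpa [map_sum, LinearMap.mul'_apply] using h0

lemma sum_counit_smul {x : H} {ιt : Type*} (t : Coalgebra.Repr K x ιt) :
    ∑ i ∈ t.index, Coalgebra.counit (R := K) (t.left i) • t.right i = x := by
  have h0 := Coalgebra.sum_counit_tmul_eq (R := K) t
  have h1 := congrArg (TensorProduct.lid K H) h0
  rw [map_sum] at h1
  simpa using h1

/-- The inverse relation: `φ(x ⊗ b) = Σ u(x₁) Φ(x₂ ⊗ b)`. -/
lemma phi_eq_u_Phi (φ : H ⊗[K] B →ₗ[K] B) (hco : IsCoalgebraMorphism K H B φ)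
    (x : H) (b : B) {ιt : Type*} (t : Coalgebra.Repr K x ιt) :
    φ (x ⊗ₜ[K] b) =
      ∑ i ∈ t.index, uMap K H B φ (t.left i) * PhiMap K H B φ (t.right i ⊗ₜ[K] b) := by
  classical
  have key :
      ∑ i ∈ t.index, uMap K H B φ (t.left i) * PhiMap K H B φ (t.right i ⊗ₜ[K] b) =
      ∑ i ∈ t.index, ∑ j ∈ (ℛ K (t.right i)).index,
        uMap K H B φ (t.left i) *
          (HopfAlgebra.antipode (R := K) (uMap K H B φ ((ℛ K (t.right i)).left j)) *
            φ ((ℛ K (t.right i)).right j ⊗ₜ[K] b)) := by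
    refine Finset.sum_congr rfl fun i _ => ?_
    rw [PhiMap_repr φ _ b (ℛ K (t.right i)), Finset.mul_sum]
  rw [key]
  have tri := sum_tri (uMap K H B φ)
    (HopfAlgebra.antipode (R := K) ∘ₗ uMap K H B φ)
    (φ ∘ₗ (TensorProduct.mk K H B).flip b) t
    (fun i => ℛ K (t.left i)) (fun i => ℛ K (t.right i))
  simp only [LinearMap.coe_comp, Function.comp_apply, LinearMap.flip_apply,
    TensorProduct.mk_apply] at tri
  rw [tri]
  symm
  calc
    ∑ i ∈ t.index, ∑ j ∈ (ℛ K (t.left i)).index,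
        uMap K H B φ ((ℛ K (t.left i)).left j) *
          (HopfAlgebra.antipode (R := K) (uMap K H B φ ((ℛ K (t.left i)).right j)) *
            φ (t.right i ⊗ₜ[K] b))
      = ∑ i ∈ t.index,
          (∑ j ∈ (ℛ K (t.left i)).index,
            uMap K H B φ ((ℛ K (t.left i)).left j) *
              HopfAlgebra.antipode (R := K) (uMap K H B φ ((ℛ K (t.left i)).right j))) *
            φ (t.right i ⊗ₜ[K] b) := by
        refine Finset.sum_congr rfl fun i _ => ?_
        rw [Finset.sum_mul]
        exact Finset.sum_congr rfl fun j _ => (mul_assoc _ _ _).symm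
    _ = ∑ i ∈ t.index, Coalgebra.counit (R := K) (t.left i) • φ (t.right i ⊗ₜ[K] b) := by
        refine Finset.sum_congr rfl fun i _ => ?_
        rw [sum_u_antipode φ hco (ℛ K (t.left i)), Algebra.smul_def]
    _ = φ (x ⊗ₜ[K] b) := by
        conv_rhs => rw [← sum_counit_smul (K := K) t]
        rw [TensorProduct.sum_tmul, map_sum]
        exact Finset.sum_congr rfl fun i _ => by rw [← TensorProduct.smul_tmul', map_smul]

lemma PhiMap_apply2 (φ : H ⊗[K] B →ₗ[K] B) (h : H) (b : B) {ι ι' : Type*}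
    (s : Finset ι) (t : Finset ι') (x y : ι → ι' → H)
    (hh : Coalgebra.comul (R := K) h = ∑ i ∈ s, ∑ j ∈ t, x i j ⊗ₜ[K] y i j) :
    PhiMap K H B φ (h ⊗ₜ[K] b) =
      ∑ i ∈ s, ∑ j ∈ t,
        HopfAlgebra.antipode (R := K) (uMap K H B φ (x i j)) * φ (y i j ⊗ₜ[K] b) := by
  rw [PhiMap]
  simp only [LinearMap.coe_comp, Function.comp_apply, LinearEquiv.coe_coe,
    LinearMap.rTensor_tmul, hh, TensorProduct.sum_tmul, map_sum,
    TensorProduct.assoc_tmul, TensorProduct.map_tmul, LinearMap.mul'_apply]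

lemma sum_counit_smul_map (F : H →ₗ[K] B) {x : H} {ιt : Type*} (t : Coalgebra.Repr K x ιt) :
    ∑ i ∈ t.index, Coalgebra.counit (R := K) (t.left i) • F (t.right i) = F x := by
  have h1 := congrArg F (sum_counit_smul (K := K) t)
  simpa [map_sum] using h1

lemma antipode_one' : HopfAlgebra.antipode (R := K) (1 : B) = 1 := by
  have h0 := HopfAlgebra.mul_antipode_rTensor_comul_apply (R := K) (1 : B)
  rw [comul_one' (K := K) (B := B)] at h0
  simpa using h0

end Aux

/-- If `(H, B, φ)` is a Hopf bracoid such that `φ` is a coalgebra morphism, then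
`(B, Φ)` is a left `H`-module algebra. -/
theorem statement3 (φ : H ⊗[K] B →ₗ[K] B)
    (hbr : IsHopfBracoid K H B φ) (hco : IsCoalgebraMorphism K H B φ) :
    IsModuleAlgebra K H B (PhiMap K H B φ) := by
  classical
  open Coalgebra HopfAlgebra in
  refine ⟨?_, ?_, ?_, ?_⟩
  · -- one_act
    intro b
    have h1 : Coalgebra.comul (R := K) (1 : H) = ∑ _i ∈ ({0} : Finset ℕ), (1 : H) ⊗ₜ[K] (1 : H) := by
      rw [Bialgebra.comul_one, Finset.sum_singleton]
      exact Algebra.TensorProduct.one_def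
    rw [PhiMap_apply'' φ 1 b _ _ _ h1, Finset.sum_singleton]
    have hu : uMap K H B φ (1 : H) = 1 := by
      rw [uMap_apply]; exact hbr.one_act 1
    rw [hu, antipode_one', one_mul]
    exact hbr.one_act b
  · -- mul_act
    intro h h' b
    have e1 : ∀ a c : H, uMap K H B φ (a * c) = φ (a ⊗ₜ[K] uMap K H B φ c) := by
      intro a c
      rw [uMap_apply, hbr.mul_act a c 1, ← uMap_apply]
    have e3 : ∀ c : H, φ (c ⊗ₜ[K] b) =
        ∑ k ∈ (ℛ K c).index,
          uMap K H B φ ((ℛ K c).left k) * PhiMap K H B φ ((ℛ K c).right k ⊗ₜ[K] b) :=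
      fun c => phi_eq_u_Phi φ hco c b (ℛ K c)
    have e4 : ∀ (x : H) (c d : B), φ (x ⊗ₜ[K] (c * d)) =
        ∑ l ∈ (ℛ K x).index,
          φ ((ℛ K x).left l ⊗ₜ[K] c) * PhiMap K H B φ ((ℛ K x).right l ⊗ₜ[K] d) :=
      fun x c d => compat' φ hbr x c d (ℛ K x)
    have hcm : Coalgebra.comul (R := K) (h * h') =
        ∑ i ∈ (ℛ K h).index, ∑ j ∈ (ℛ K h').index,
          ((ℛ K h).left i * (ℛ K h').left j) ⊗ₜ[K]
            ((ℛ K h).right i * (ℛ K h').right j) := by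
      rw [Bialgebra.comul_mul, ← (ℛ K h).eq, ← (ℛ K h').eq, Finset.sum_mul_sum]
      simp [Algebra.TensorProduct.tmul_mul_tmul]
    rw [PhiMap_apply2 φ (h * h') b _ _ _ _ hcm]
    simp only [e1, hbr.mul_act]
    simp only [e3]
    simp only [TensorProduct.tmul_sum, map_sum, Finset.mul_sum]
    simp only [e4]
    simp only [Finset.mul_sum]
    calc
      ∑ i ∈ (ℛ K h).index, ∑ j ∈ (ℛ K h').index, ∑ k ∈ (ℛ K ((ℛ K h').right j)).index, ∑ l ∈ (ℛ K ((ℛ K h).right i)).index, HopfAlgebra.antipode (R := K) (φ ((ℛ K h).left i ⊗ₜ[K] uMap K H B φ ((ℛ K h').left j))) * (φ ((ℛ K ((ℛ K h).right i)).left l ⊗ₜ[K] uMap K H B φ ((ℛ K ((ℛ K h').right j)).left k)) * PhiMap K H B φ ((ℛ K ((ℛ K h).right i)).right l ⊗ₜ[K] PhiMap K H B φ ((ℛ K ((ℛ K h').right j)).right k ⊗ₜ[K] b)))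
        = ∑ j ∈ (ℛ K h').index, ∑ i ∈ (ℛ K h).index, ∑ k ∈ (ℛ K ((ℛ K h').right j)).index, ∑ l ∈ (ℛ K ((ℛ K h).right i)).index, HopfAlgebra.antipode (R := K) (φ ((ℛ K h).left i ⊗ₜ[K] uMap K H B φ ((ℛ K h').left j))) * (φ ((ℛ K ((ℛ K h).right i)).left l ⊗ₜ[K] uMap K H B φ ((ℛ K ((ℛ K h').right j)).left k)) * PhiMap K H B φ ((ℛ K ((ℛ K h).right i)).right l ⊗ₜ[K] PhiMap K H B φ ((ℛ K ((ℛ K h').right j)).right k ⊗ₜ[K] b))) := Finset.sum_comm ..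
      _ = ∑ j ∈ (ℛ K h').index, ∑ k ∈ (ℛ K ((ℛ K h').right j)).index, ∑ i ∈ (ℛ K h).index, ∑ l ∈ (ℛ K ((ℛ K h).right i)).index, HopfAlgebra.antipode (R := K) (φ ((ℛ K h).left i ⊗ₜ[K] uMap K H B φ ((ℛ K h').left j))) * (φ ((ℛ K ((ℛ K h).right i)).left l ⊗ₜ[K] uMap K H B φ ((ℛ K ((ℛ K h').right j)).left k)) * PhiMap K H B φ ((ℛ K ((ℛ K h).right i)).right l ⊗ₜ[K] PhiMap K H B φ ((ℛ K ((ℛ K h').right j)).right k ⊗ₜ[K] b))) := by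
          refine Finset.sum_congr rfl fun j _ => ?_
          exact Finset.sum_comm ..
      _ = ∑ j ∈ (ℛ K h').index, ∑ k ∈ (ℛ K ((ℛ K h').right j)).index, ∑ i ∈ (ℛ K h).index, ∑ p ∈ (ℛ K ((ℛ K h).left i)).index, HopfAlgebra.antipode (R := K) (φ ((ℛ K ((ℛ K h).left i)).left p ⊗ₜ[K] uMap K H B φ ((ℛ K h').left j))) * (φ ((ℛ K ((ℛ K h).left i)).right p ⊗ₜ[K] uMap K H B φ ((ℛ K ((ℛ K h').right j)).left k)) * PhiMap K H B φ ((ℛ K h).right i ⊗ₜ[K] PhiMap K H B φ ((ℛ K ((ℛ K h').right j)).right k ⊗ₜ[K] b))) := by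
          refine Finset.sum_congr rfl fun j _ => Finset.sum_congr rfl fun k _ => ?_
          have tri := sum_tri
            (HopfAlgebra.antipode (R := K) ∘ₗ
              (φ ∘ₗ (TensorProduct.mk K H B).flip (uMap K H B φ ((ℛ K h').left j))))
            (φ ∘ₗ (TensorProduct.mk K H B).flip
              (uMap K H B φ ((ℛ K ((ℛ K h').right j)).left k)))
            (PhiMap K H B φ ∘ₗ (TensorProduct.mk K H B).flip
              (PhiMap K H B φ ((ℛ K ((ℛ K h').right j)).right k ⊗ₜ[K] b)))
            (ℛ K h) (fun i => ℛ K ((ℛ K h).left i)) (fun i => ℛ K ((ℛ K h).right i))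
          simp only [LinearMap.coe_comp, Function.comp_apply, LinearMap.flip_apply,
            TensorProduct.mk_apply] at tri
          exact tri
      _ = ∑ j ∈ (ℛ K h').index, ∑ i ∈ (ℛ K h).index, ∑ k ∈ (ℛ K ((ℛ K h').right j)).index, ∑ p ∈ (ℛ K ((ℛ K h).left i)).index, HopfAlgebra.antipode (R := K) (φ ((ℛ K ((ℛ K h).left i)).left p ⊗ₜ[K] uMap K H B φ ((ℛ K h').left j))) * (φ ((ℛ K ((ℛ K h).left i)).right p ⊗ₜ[K] uMap K H B φ ((ℛ K ((ℛ K h').right j)).left k)) * PhiMap K H B φ ((ℛ K h).right i ⊗ₜ[K] PhiMap K H B φ ((ℛ K ((ℛ K h').right j)).right k ⊗ₜ[K] b))) := by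
          refine Finset.sum_congr rfl fun j _ => ?_
          exact Finset.sum_comm ..
      _ = ∑ j ∈ (ℛ K h').index, ∑ i ∈ (ℛ K h).index, ∑ p ∈ (ℛ K ((ℛ K h).left i)).index, ∑ k ∈ (ℛ K ((ℛ K h').right j)).index, HopfAlgebra.antipode (R := K) (φ ((ℛ K ((ℛ K h).left i)).left p ⊗ₜ[K] uMap K H B φ ((ℛ K h').left j))) * (φ ((ℛ K ((ℛ K h).left i)).right p ⊗ₜ[K] uMap K H B φ ((ℛ K ((ℛ K h').right j)).left k)) * PhiMap K H B φ ((ℛ K h).right i ⊗ₜ[K] PhiMap K H B φ ((ℛ K ((ℛ K h').right j)).right k ⊗ₜ[K] b))) := by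
          refine Finset.sum_congr rfl fun j _ => Finset.sum_congr rfl fun i _ => ?_
          exact Finset.sum_comm ..
      _ = ∑ i ∈ (ℛ K h).index, ∑ j ∈ (ℛ K h').index, ∑ p ∈ (ℛ K ((ℛ K h).left i)).index, ∑ k ∈ (ℛ K ((ℛ K h').right j)).index, HopfAlgebra.antipode (R := K) (φ ((ℛ K ((ℛ K h).left i)).left p ⊗ₜ[K] uMap K H B φ ((ℛ K h').left j))) * (φ ((ℛ K ((ℛ K h).left i)).right p ⊗ₜ[K] uMap K H B φ ((ℛ K ((ℛ K h').right j)).left k)) * PhiMap K H B φ ((ℛ K h).right i ⊗ₜ[K] PhiMap K H B φ ((ℛ K ((ℛ K h').right j)).right k ⊗ₜ[K] b))) := Finset.sum_comm ..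
      _ = ∑ i ∈ (ℛ K h).index, ∑ p ∈ (ℛ K ((ℛ K h).left i)).index, ∑ j ∈ (ℛ K h').index, ∑ k ∈ (ℛ K ((ℛ K h').right j)).index, HopfAlgebra.antipode (R := K) (φ ((ℛ K ((ℛ K h).left i)).left p ⊗ₜ[K] uMap K H B φ ((ℛ K h').left j))) * (φ ((ℛ K ((ℛ K h).left i)).right p ⊗ₜ[K] uMap K H B φ ((ℛ K ((ℛ K h').right j)).left k)) * PhiMap K H B φ ((ℛ K h).right i ⊗ₜ[K] PhiMap K H B φ ((ℛ K ((ℛ K h').right j)).right k ⊗ₜ[K] b))) := by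
          refine Finset.sum_congr rfl fun i _ => ?_
          exact Finset.sum_comm ..
      _ = ∑ i ∈ (ℛ K h).index, ∑ p ∈ (ℛ K ((ℛ K h).left i)).index, ∑ j ∈ (ℛ K h').index, ∑ q ∈ (ℛ K ((ℛ K h').left j)).index, HopfAlgebra.antipode (R := K) (φ ((ℛ K ((ℛ K h).left i)).left p ⊗ₜ[K] uMap K H B φ ((ℛ K ((ℛ K h').left j)).left q))) * (φ ((ℛ K ((ℛ K h).left i)).right p ⊗ₜ[K] uMap K H B φ ((ℛ K ((ℛ K h').left j)).right q)) * PhiMap K H B φ ((ℛ K h).right i ⊗ₜ[K] PhiMap K H B φ ((ℛ K h').right j ⊗ₜ[K] b))) := by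
          refine Finset.sum_congr rfl fun i _ => Finset.sum_congr rfl fun p _ => ?_
          have tri := sum_tri
            (HopfAlgebra.antipode (R := K) ∘ₗ
              (φ ∘ₗ TensorProduct.mk K H B ((ℛ K ((ℛ K h).left i)).left p) ∘ₗ uMap K H B φ))
            (φ ∘ₗ TensorProduct.mk K H B ((ℛ K ((ℛ K h).left i)).right p) ∘ₗ uMap K H B φ)
            (PhiMap K H B φ ∘ₗ TensorProduct.mk K H B ((ℛ K h).right i) ∘ₗ
              (PhiMap K H B φ ∘ₗ (TensorProduct.mk K H B).flip b))
            (ℛ K h') (fun j => ℛ K ((ℛ K h').left j)) (fun j => ℛ K ((ℛ K h').right j))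
          simp only [LinearMap.coe_comp, Function.comp_apply, LinearMap.flip_apply,
            TensorProduct.mk_apply] at tri
          exact tri
      _ = ∑ i ∈ (ℛ K h).index, ∑ j ∈ (ℛ K h').index, ∑ p ∈ (ℛ K ((ℛ K h).left i)).index, ∑ q ∈ (ℛ K ((ℛ K h').left j)).index, HopfAlgebra.antipode (R := K) (φ ((ℛ K ((ℛ K h).left i)).left p ⊗ₜ[K] uMap K H B φ ((ℛ K ((ℛ K h').left j)).left q))) * (φ ((ℛ K ((ℛ K h).left i)).right p ⊗ₜ[K] uMap K H B φ ((ℛ K ((ℛ K h').left j)).right q)) * PhiMap K H B φ ((ℛ K h).right i ⊗ₜ[K] PhiMap K H B φ ((ℛ K h').right j ⊗ₜ[K] b))) := by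
          refine Finset.sum_congr rfl fun i _ => ?_
          exact Finset.sum_comm ..
      _ = ∑ i ∈ (ℛ K h).index, ∑ j ∈ (ℛ K h').index, algebraMap K B (Coalgebra.counit (R := K) ((ℛ K h).left i) * Coalgebra.counit (R := K) ((ℛ K h').left j)) * (PhiMap K H B φ ((ℛ K h).right i ⊗ₜ[K] PhiMap K H B φ ((ℛ K h').right j ⊗ₜ[K] b))) := by
          refine Finset.sum_congr rfl fun i _ => Finset.sum_congr rfl fun j _ => ?_
          simp only [← mul_assoc]
          simp only [← Finset.sum_mul]
          rw [lemC φ hco (ℛ K ((ℛ K h).left i)) (ℛ K ((ℛ K h').left j))]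
      _ = ∑ i ∈ (ℛ K h).index, ∑ j ∈ (ℛ K h').index, Coalgebra.counit (R := K) ((ℛ K h).left i) • (Coalgebra.counit (R := K) ((ℛ K h').left j) • PhiMap K H B φ ((ℛ K h).right i ⊗ₜ[K] PhiMap K H B φ ((ℛ K h').right j ⊗ₜ[K] b))) := by
          simp only [map_mul, mul_assoc]
          simp only [← Algebra.smul_def]
      _ = ∑ i ∈ (ℛ K h).index, Coalgebra.counit (R := K) ((ℛ K h).left i) • PhiMap K H B φ ((ℛ K h).right i ⊗ₜ[K] PhiMap K H B φ (h' ⊗ₜ[K] b)) := by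
          refine Finset.sum_congr rfl fun i _ => ?_
          rw [← Finset.smul_sum]
          congr 1
          have hs := sum_counit_smul_map
            (PhiMap K H B φ ∘ₗ TensorProduct.mk K H B ((ℛ K h).right i) ∘ₗ
              (PhiMap K H B φ ∘ₗ (TensorProduct.mk K H B).flip b)) (ℛ K h')
          simp only [LinearMap.coe_comp, Function.comp_apply, LinearMap.flip_apply,
            TensorProduct.mk_apply] at hs
          exact hs
      _ = PhiMap K H B φ (h ⊗ₜ[K] PhiMap K H B φ (h' ⊗ₜ[K] b)) := by
          have hs := sum_counit_smul_map
            (PhiMap K H B φ ∘ₗ (TensorProduct.mk K H B).flip (PhiMap K H B φ (h' ⊗ₜ[K] b)))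
            (ℛ K h)
          simp only [LinearMap.coe_comp, Function.comp_apply, LinearMap.flip_apply,
            TensorProduct.mk_apply] at hs
          exact hs

  · -- act_one
    intro h
    have hs := sum_antipode_u φ hco (ℛ K h)
    simp only [uMap_apply] at hs
    rw [PhiMap_repr φ h 1 (ℛ K h)]
    simp only [uMap_apply]
    rw [hs]
    exact Algebra.algebraMap_eq_smul_one _
  · -- act_mul
    intro h b b'
    rw [map_mul'_apply (PhiMap K H B φ) (PhiMap K H B φ) h b b' (ℛ K h)]
    rw [PhiMap_repr φ h (b * b') (ℛ K h)]
    calc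
      ∑ i ∈ (ℛ K h).index,
          HopfAlgebra.antipode (R := K) (uMap K H B φ ((ℛ K h).left i)) *
            φ ((ℛ K h).right i ⊗ₜ[K] (b * b'))
        = ∑ i ∈ (ℛ K h).index, ∑ j ∈ (ℛ K ((ℛ K h).right i)).index,
            HopfAlgebra.antipode (R := K) (uMap K H B φ ((ℛ K h).left i)) *
              (φ ((ℛ K ((ℛ K h).right i)).left j ⊗ₜ[K] b) *
                PhiMap K H B φ ((ℛ K ((ℛ K h).right i)).right j ⊗ₜ[K] b')) := by
          refine Finset.sum_congr rfl fun i _ => ?_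
          rw [compat' φ hbr _ b b' (ℛ K ((ℛ K h).right i)), Finset.mul_sum]
      _ = ∑ i ∈ (ℛ K h).index, ∑ j ∈ (ℛ K ((ℛ K h).left i)).index,
            HopfAlgebra.antipode (R := K) (uMap K H B φ ((ℛ K ((ℛ K h).left i)).left j)) *
              (φ ((ℛ K ((ℛ K h).left i)).right j ⊗ₜ[K] b) *
                PhiMap K H B φ ((ℛ K h).right i ⊗ₜ[K] b')) := by
          have tri := sum_tri (HopfAlgebra.antipode (R := K) ∘ₗ uMap K H B φ)
            (φ ∘ₗ (TensorProduct.mk K H B).flip b)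
            (PhiMap K H B φ ∘ₗ (TensorProduct.mk K H B).flip b')
            (ℛ K h) (fun i => ℛ K ((ℛ K h).left i)) (fun i => ℛ K ((ℛ K h).right i))
          simp only [LinearMap.coe_comp, Function.comp_apply, LinearMap.flip_apply,
            TensorProduct.mk_apply] at tri
          exact tri
      _ = ∑ i ∈ (ℛ K h).index,
            PhiMap K H B φ ((ℛ K h).left i ⊗ₜ[K] b) *
              PhiMap K H B φ ((ℛ K h).right i ⊗ₜ[K] b') := by
          refine Finset.sum_congr rfl fun i _ => ?_
          rw [PhiMap_repr φ ((ℛ K h).left i) b (ℛ K ((ℛ K h).left i)), Finset.sum_mul]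
          exact Finset.sum_congr rfl fun j _ => (mul_assoc _ _ _).symm

end HopfBracoidPaper
end
end

section
/- Let H and B be Hopf algebras over a field K and let φ : H ⊗ B → B make B a left H-module. Set u(h) := φ(h ⊗ 1_B), Φ(h ⊗ b) := Σ S_B(u(h₍₁₎)) · φ(h₍₂₎ ⊗ b) and Φ'(h ⊗ b) := Σ φ(h₍₁₎ ⊗ b) · S_B(u(h₍₂₎)). Then for all h ∈ H and b, b' ∈ B one has Σ φ(h₍₁₎ ⊗ b) · Φ(h₍₂₎ ⊗ b') = Σ Φ'(h₍₁₎ ⊗ b) · φ(h₍₂₎ ⊗ b'). Consequently (H, B, φ) is a Hopf bracoid if and only if φ(h ⊗ b b') = Σ Φ'(h₍₁₎ ⊗ b) · φ(h₍₂₎ ⊗ b') for all h ∈ H and b, b' ∈ B. -/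
open TensorProduct LinearMap

noncomputable section

set_option synthInstance.maxHeartbeats 1000000

namespace HopfBracoidPaper

variable (K : Type*) [Field K]
variable (H B : Type*) [Ring H] [Ring B] [HopfAlgebra K H] [HopfAlgebra K B]

/-! ### Auxiliary lemmas for `statement5` -/

/-- `h ↦ φ(h ⊗ b)`. -/
def pAct (φ : H ⊗[K] B →ₗ[K] B) (b : B) : H →ₗ[K] B :=
  φ ∘ₗ (TensorProduct.mk K H B).flip b

/-- `h ↦ S_B(u(h))`. -/
def sMap (φ : H ⊗[K] B →ₗ[K] B) : H →ₗ[K] B :=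
  HopfAlgebra.antipode (R := K) ∘ₗ uMap K H B φ

/-- `x ⊗ (y ⊗ z) ↦ φ(x⊗b)·(S(u(y))·φ(z⊗b'))`. -/
def A1 (φ : H ⊗[K] B →ₗ[K] B) (b b' : B) : H ⊗[K] (H ⊗[K] H) →ₗ[K] B :=
  LinearMap.mul' K B ∘ₗ TensorProduct.map (pAct K H B φ b)
    (LinearMap.mul' K B ∘ₗ TensorProduct.map (sMap K H B φ) (pAct K H B φ b'))

/-- `(x ⊗ y) ⊗ z ↦ (φ(x⊗b)·S(u(y)))·φ(z⊗b')`. -/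
def A2 (φ : H ⊗[K] B →ₗ[K] B) (b b' : B) : (H ⊗[K] H) ⊗[K] H →ₗ[K] B :=
  LinearMap.mul' K B ∘ₗ TensorProduct.map
    (LinearMap.mul' K B ∘ₗ TensorProduct.map (pAct K H B φ b) (sMap K H B φ))
    (pAct K H B φ b')

lemma A1_assoc (φ : H ⊗[K] B →ₗ[K] B) (b b' : B) (t : (H ⊗[K] H) ⊗[K] H) :
    A1 K H B φ b b' ((TensorProduct.assoc K H H H) t) = A2 K H B φ b b' t := by
  induction t using TensorProduct.induction_on with
  | zero => simp
  | tmul s z =>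
    induction s using TensorProduct.induction_on with
    | zero => simp [TensorProduct.zero_tmul]
    | tmul x y => simp [A1, A2, pAct, sMap, mul_assoc]
    | add s1 s2 h1 h2 => simp only [TensorProduct.add_tmul, map_add, h1, h2]
  | add t1 t2 h1 h2 => simp only [map_add, h1, h2]

lemma phiMap_comul (φ : H ⊗[K] B →ₗ[K] B) (b' : B) (y : H) :
    PhiMap K H B φ (y ⊗ₜ[K] b') =
      (LinearMap.mul' K B ∘ₗ TensorProduct.map (sMap K H B φ) (pAct K H B φ b'))
        (Coalgebra.comul (R := K) y) := by
  have key : ∀ r : H ⊗[K] H,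
      (LinearMap.mul' K B)
        ((TensorProduct.map (HopfAlgebra.antipode (R := K) ∘ₗ uMap K H B φ) φ)
          ((TensorProduct.assoc K H H B) (r ⊗ₜ[K] b'))) =
      (LinearMap.mul' K B)
        ((TensorProduct.map (sMap K H B φ) (pAct K H B φ b')) r) := by
    intro r
    induction r using TensorProduct.induction_on with
    | zero => simp [TensorProduct.zero_tmul]
    | tmul x y => simp [sMap, pAct]
    | add r1 r2 h1 h2 => simp only [TensorProduct.add_tmul, map_add, h1, h2]
  simp only [PhiMap, LinearMap.coe_comp, Function.comp_apply,
    LinearEquiv.coe_coe, LinearMap.rTensor_tmul]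
  exact key _

lemma phiMap'_comul (φ : H ⊗[K] B →ₗ[K] B) (b : B) (y : H) :
    PhiMap' K H B φ (y ⊗ₜ[K] b) =
      (LinearMap.mul' K B ∘ₗ TensorProduct.map (pAct K H B φ b) (sMap K H B φ))
        (Coalgebra.comul (R := K) y) := by
  have key : ∀ r : H ⊗[K] H,
      (LinearMap.mul' K B)
        ((TensorProduct.map φ (HopfAlgebra.antipode (R := K) ∘ₗ uMap K H B φ))
          ((TensorProduct.assoc K H B H).symm
            ((LinearMap.lTensor H (TensorProduct.comm K H B).toLinearMap)
              ((TensorProduct.assoc K H H B) (r ⊗ₜ[K] b))))) =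
      (LinearMap.mul' K B)
        ((TensorProduct.map (pAct K H B φ b) (sMap K H B φ)) r) := by
    intro r
    induction r using TensorProduct.induction_on with
    | zero => simp [TensorProduct.zero_tmul]
    | tmul x y => simp [sMap, pAct]
    | add r1 r2 h1 h2 => simp only [TensorProduct.add_tmul, map_add, h1, h2]
  simp only [PhiMap', LinearMap.coe_comp, Function.comp_apply,
    LinearEquiv.coe_coe, LinearMap.rTensor_tmul]
  exact key _

lemma lhs_eq (φ : H ⊗[K] B →ₗ[K] B) (b b' : B) (s : H ⊗[K] H) :
    (LinearMap.mul' K B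
      ∘ₗ TensorProduct.map φ (PhiMap K H B φ)
      ∘ₗ (TensorProduct.tensorTensorTensorComm K H H B B).toLinearMap)
      (s ⊗ₜ[K] (b ⊗ₜ[K] b')) =
    A1 K H B φ b b' ((LinearMap.lTensor H (Coalgebra.comul (R := K))) s) := by
  induction s using TensorProduct.induction_on with
  | zero => simp [TensorProduct.zero_tmul]
  | tmul x y =>
    simp only [LinearMap.coe_comp, Function.comp_apply, LinearEquiv.coe_coe,
      TensorProduct.tensorTensorTensorComm_tmul, TensorProduct.map_tmul,
      LinearMap.lTensor_tmul, A1, phiMap_comul]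
    rfl
  | add s1 s2 h1 h2 => simp only [TensorProduct.add_tmul, map_add, h1, h2]

lemma rhs_eq (φ : H ⊗[K] B →ₗ[K] B) (b b' : B) (s : H ⊗[K] H) :
    (LinearMap.mul' K B
      ∘ₗ TensorProduct.map (PhiMap' K H B φ) φ
      ∘ₗ (TensorProduct.tensorTensorTensorComm K H H B B).toLinearMap)
      (s ⊗ₜ[K] (b ⊗ₜ[K] b')) =
    A2 K H B φ b b' ((LinearMap.rTensor H (Coalgebra.comul (R := K))) s) := by
  induction s using TensorProduct.induction_on with
  | zero => simp [TensorProduct.zero_tmul]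
  | tmul x y =>
    simp only [LinearMap.coe_comp, Function.comp_apply, LinearEquiv.coe_coe,
      TensorProduct.tensorTensorTensorComm_tmul, TensorProduct.map_tmul,
      LinearMap.rTensor_tmul, A2, phiMap'_comul]
    rfl
  | add s1 s2 h1 h2 => simp only [TensorProduct.add_tmul, map_add, h1, h2]

/-- `Σ φ(h₍₁₎ ⊗ b) · Φ(h₍₂₎ ⊗ b') = Σ Φ'(h₍₁₎ ⊗ b) · φ(h₍₂₎ ⊗ b')`, and consequently
`(H, B, φ)` is a Hopf bracoid iff `φ(h ⊗ b b') = Σ Φ'(h₍₁₎ ⊗ b) · φ(h₍₂₎ ⊗ b')`. -/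
theorem statement5 (φ : H ⊗[K] B →ₗ[K] B) (hmod : IsModuleAction K H B φ) :
    (∀ (h : H) (b b' : B),
      (LinearMap.mul' K B
        ∘ₗ TensorProduct.map φ (PhiMap K H B φ)
        ∘ₗ (TensorProduct.tensorTensorTensorComm K H H B B).toLinearMap)
        ((Coalgebra.comul (R := K) h) ⊗ₜ[K] (b ⊗ₜ[K] b')) =
      (LinearMap.mul' K B
        ∘ₗ TensorProduct.map (PhiMap' K H B φ) φ
        ∘ₗ (TensorProduct.tensorTensorTensorComm K H H B B).toLinearMap)
        ((Coalgebra.comul (R := K) h) ⊗ₜ[K] (b ⊗ₜ[K] b'))) ∧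
    (IsHopfBracoid K H B φ ↔
      ∀ (h : H) (b b' : B),
        φ (h ⊗ₜ[K] (b * b')) =
          (LinearMap.mul' K B
            ∘ₗ TensorProduct.map (PhiMap' K H B φ) φ
            ∘ₗ (TensorProduct.tensorTensorTensorComm K H H B B).toLinearMap)
            ((Coalgebra.comul (R := K) h) ⊗ₜ[K] (b ⊗ₜ[K] b'))) := by
  have h1 : ∀ (h : H) (b b' : B),
      (LinearMap.mul' K B
        ∘ₗ TensorProduct.map φ (PhiMap K H B φ)
        ∘ₗ (TensorProduct.tensorTensorTensorComm K H H B B).toLinearMap)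
        ((Coalgebra.comul (R := K) h) ⊗ₜ[K] (b ⊗ₜ[K] b')) =
      (LinearMap.mul' K B
        ∘ₗ TensorProduct.map (PhiMap' K H B φ) φ
        ∘ₗ (TensorProduct.tensorTensorTensorComm K H H B B).toLinearMap)
        ((Coalgebra.comul (R := K) h) ⊗ₜ[K] (b ⊗ₜ[K] b')) := by
    intro h b b'
    rw [lhs_eq, rhs_eq, ← Coalgebra.coassoc_apply (R := K) h, A1_assoc]
  refine ⟨h1, ?_, ?_⟩
  · intro hb h b b'
    exact (hb.compat h b b').trans (h1 h b b')
  · intro hc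
    exact ⟨hmod.one_act, hmod.mul_act, fun h b b' => (hc h b b').trans (h1 h b b').symm⟩


end HopfBracoidPaper
end
end

section
/- Let π : H → B be a 1-cocycle over a field K with action γ : H ⊗ B → B, and define ψ : H ⊗ B → B by ψ(h ⊗ b) := Σ π(h₍₁₎) · γ(h₍₂₎ ⊗ b). Then (H, B, ψ) is a Hopf bracoid over K; moreover u_ψ(h) := ψ(h ⊗ 1_B) equals π(h) for all h ∈ H, and the associated map Φ_ψ(h ⊗ b) := Σ S_B(u_ψ(h₍₁₎)) · ψ(h₍₂₎ ⊗ b) equals γ(h ⊗ b) for all h ∈ H and b ∈ B. -/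
open TensorProduct LinearMap

noncomputable section

namespace HopfBracoidPaper

variable (K : Type*) [Field K]
variable (H B : Type*) [Ring H] [Ring B] [HopfAlgebra K H] [HopfAlgebra K B]

section Aux
variable {K H B}

/-- `gcM γ c : h ↦ γ(h ⊗ c)`. -/
def gcM (γ : H ⊗[K] B →ₗ[K] B) (c : B) : H →ₗ[K] B :=
  γ ∘ₗ (TensorProduct.mk K H B).flip c

@[simp] lemma gcM_apply (γ : H ⊗[K] B →ₗ[K] B) (c : B) (h : H) :
    gcM γ c h = γ (h ⊗ₜ[K] c) := rfl

/-- Triple convolution-type map, left-associated. -/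
def Tr3 (f₁ f₂ f₃ : H →ₗ[K] B) : H →ₗ[K] B :=
  LinearMap.mul' K B
    ∘ₗ TensorProduct.map (LinearMap.mul' K B ∘ₗ TensorProduct.map f₁ f₂) f₃
    ∘ₗ LinearMap.rTensor H (Coalgebra.comul (R := K)) ∘ₗ Coalgebra.comul (R := K)

/-- Triple convolution-type map, right-associated. -/
def Tl3 (f₁ f₂ f₃ : H →ₗ[K] B) : H →ₗ[K] B :=
  LinearMap.mul' K B
    ∘ₗ TensorProduct.map f₁ (LinearMap.mul' K B ∘ₗ TensorProduct.map f₂ f₃)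
    ∘ₗ LinearMap.lTensor H (Coalgebra.comul (R := K)) ∘ₗ Coalgebra.comul (R := K)

lemma Tr3_eq_Tl3 (f₁ f₂ f₃ : H →ₗ[K] B) : Tr3 f₁ f₂ f₃ = Tl3 f₁ f₂ f₃ := by
  have key : (LinearMap.mul' K B
        ∘ₗ TensorProduct.map f₁ (LinearMap.mul' K B ∘ₗ TensorProduct.map f₂ f₃))
        ∘ₗ (TensorProduct.assoc K H H H).toLinearMap
      = LinearMap.mul' K B
        ∘ₗ TensorProduct.map (LinearMap.mul' K B ∘ₗ TensorProduct.map f₁ f₂) f₃ := by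
    apply TensorProduct.ext_threefold
    intro x y z
    simp [mul_assoc]
  ext h
  have : Tr3 f₁ f₂ f₃ h
      = ((LinearMap.mul' K B
        ∘ₗ TensorProduct.map f₁ (LinearMap.mul' K B ∘ₗ TensorProduct.map f₂ f₃))
        ∘ₗ (TensorProduct.assoc K H H H).toLinearMap)
        ((Coalgebra.comul (R := K)).rTensor H (Coalgebra.comul (R := K) h)) := by
    rw [key]; rfl
  rw [Tl3]
  simp only [LinearMap.coe_comp, Function.comp_apply] at this ⊢
  rw [this, LinearEquiv.coe_coe, Coalgebra.coassoc_apply]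

lemma Tr3_apply (f₁ f₂ f₃ : H →ₗ[K] B) (h : H) {ι : Type*} (r : Coalgebra.Repr K h ι) :
    Tr3 f₁ f₂ f₃ h = ∑ i ∈ r.index,
      LinearMap.mul' K B (TensorProduct.map f₁ f₂ (Coalgebra.comul (R := K) (r.left i)))
        * f₃ (r.right i) := by
  simp only [Tr3, LinearMap.coe_comp, Function.comp_apply, ← r.eq, map_sum,
    LinearMap.rTensor_tmul, TensorProduct.map_tmul, LinearMap.mul'_apply]

lemma Tl3_apply (f₁ f₂ f₃ : H →ₗ[K] B) (h : H) {ι : Type*} (r : Coalgebra.Repr K h ι) :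
    Tl3 f₁ f₂ f₃ h = ∑ i ∈ r.index,
      f₁ (r.left i) *
        LinearMap.mul' K B (TensorProduct.map f₂ f₃ (Coalgebra.comul (R := K) (r.right i))) := by
  simp only [Tl3, LinearMap.coe_comp, Function.comp_apply, ← r.eq, map_sum,
    LinearMap.lTensor_tmul, TensorProduct.map_tmul, LinearMap.mul'_apply]

lemma psi_tmul (π : H →ₗ[K] B) (γ : H ⊗[K] B →ₗ[K] B) (h : H) (b : B)
    {ι : Type*} (r : Coalgebra.Repr K h ι) :
    psiMap K H B π γ (h ⊗ₜ[K] b) = ∑ i ∈ r.index,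
      π (r.left i) * γ (r.right i ⊗ₜ[K] b) := by
  simp only [psiMap, LinearMap.coe_comp, Function.comp_apply, LinearMap.rTensor_tmul,
    ← r.eq, TensorProduct.sum_tmul, map_sum]
  simp only [LinearEquiv.coe_coe, TensorProduct.assoc_tmul, TensorProduct.map_tmul,
    LinearMap.mul'_apply]

lemma psi_tmul' (π : H →ₗ[K] B) (γ : H ⊗[K] B →ₗ[K] B) (h : H) (b : B) :
    psiMap K H B π γ (h ⊗ₜ[K] b)
      = (LinearMap.mul' K B ∘ₗ TensorProduct.map π (gcM γ b)) (Coalgebra.comul (R := K) h) := by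
  rw [psi_tmul π γ h b (Coalgebra.Repr.arbitrary K h)]
  rw [LinearMap.comp_apply, ← (Coalgebra.Repr.arbitrary K h).eq, map_sum, map_sum]
  simp

lemma sum_counit_smul_right (h : H) {ι : Type*} (r : Coalgebra.Repr K h ι) :
    ∑ i ∈ r.index, Coalgebra.counit (R := K) (r.left i) • r.right i = h := by
  have h1 := Coalgebra.sum_counit_tmul_eq (R := K) r
  calc ∑ i ∈ r.index, Coalgebra.counit (R := K) (r.left i) • r.right i
      = TensorProduct.lid K H
          (∑ i ∈ r.index, Coalgebra.counit (R := K) (r.left i) ⊗ₜ[K] r.right i) := by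
        rw [map_sum]; simp
    _ = TensorProduct.lid K H ((1 : K) ⊗ₜ[K] h) := by rw [h1]
    _ = h := by simp

lemma sum_smul_counit_left (h : H) {ι : Type*} (r : Coalgebra.Repr K h ι) :
    ∑ i ∈ r.index, Coalgebra.counit (R := K) (r.right i) • r.left i = h := by
  have h1 := Coalgebra.sum_tmul_counit_eq (R := K) r
  calc ∑ i ∈ r.index, Coalgebra.counit (R := K) (r.right i) • r.left i
      = TensorProduct.rid K H
          (∑ i ∈ r.index, r.left i ⊗ₜ[K] Coalgebra.counit (R := K) (r.right i)) := by
        rw [map_sum]; simp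
    _ = TensorProduct.rid K H (h ⊗ₜ[K] (1 : K)) := by rw [h1]
    _ = h := by simp

variable {π : H →ₗ[K] B} {γ : H ⊗[K] B →ₗ[K] B}

lemma pi_one (hcoc : IsOneCocycle K H B π γ) : π (1 : H) = (1 : B) := by
  have e1 : π (1 : H) * π 1 = π 1 := by
    have h0 := hcoc.cocycle 1 1
    simp only [one_mul, LinearMap.coe_comp, Function.comp_apply, Bialgebra.comul_one,
      Algebra.TensorProduct.one_def, LinearEquiv.coe_coe, TensorProduct.assoc_tmul,
      TensorProduct.map_tmul, LinearMap.mul'_apply,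
      hcoc.moduleAlgebra.one_act] at h0
    exact h0.symm
  have hc : Coalgebra.comul (R := K) (π (1 : H)) = π 1 ⊗ₜ[K] π 1 := by
    rw [hcoc.comul_comp]
    simp [Algebra.TensorProduct.one_def]
  have e2 : HopfAlgebra.antipode (R := K) (π (1 : H)) * π 1 = 1 := by
    have h0 := HopfAlgebra.mul_antipode_rTensor_comul_apply (R := K) (π (1 : H))
    rw [hc] at h0
    simpa [hcoc.counit_comp] using h0
  calc π (1 : H) = (HopfAlgebra.antipode (R := K) (π (1 : H)) * π 1) * π 1 := by
        rw [e2, one_mul]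
    _ = HopfAlgebra.antipode (R := K) (π (1 : H)) * (π 1 * π 1) := by rw [mul_assoc]
    _ = 1 := by rw [e1, e2]

lemma antipode_pi (hcoc : IsOneCocycle K H B π γ) (x : H) :
    LinearMap.mul' K B
      (TensorProduct.map (HopfAlgebra.antipode (R := K) ∘ₗ π) π (Coalgebra.comul (R := K) x))
      = Coalgebra.counit (R := K) x • (1 : B) := by
  have h1 : TensorProduct.map (HopfAlgebra.antipode (R := K) ∘ₗ π) π
      = (HopfAlgebra.antipode (R := K)).rTensor B ∘ₗ TensorProduct.map π π := by
    rw [LinearMap.rTensor, ← TensorProduct.map_comp, LinearMap.id_comp]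
  rw [h1, LinearMap.comp_apply, ← hcoc.comul_comp,
    HopfAlgebra.mul_antipode_rTensor_comul_apply, hcoc.counit_comp]
  simp [Algebra.algebraMap_eq_smul_one]

lemma gamma_act_mul (hγ : IsModuleAlgebra K H B γ) (h : H) (c d : B) :
    γ (h ⊗ₜ[K] (c * d))
      = (LinearMap.mul' K B ∘ₗ TensorProduct.map (gcM γ c) (gcM γ d))
          (Coalgebra.comul (R := K) h) := by
  rw [hγ.act_mul h c d]
  have key : ∀ t : H ⊗[K] H,
      (LinearMap.mul' K B ∘ₗ TensorProduct.map γ γ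
        ∘ₗ (TensorProduct.tensorTensorTensorComm K H H B B).toLinearMap)
        (t ⊗ₜ[K] (c ⊗ₜ[K] d))
      = (LinearMap.mul' K B ∘ₗ TensorProduct.map (gcM γ c) (gcM γ d)) t := by
    intro t
    induction t using TensorProduct.induction_on with
    | zero => simp only [TensorProduct.zero_tmul, map_zero]
    | tmul x y => simp [TensorProduct.tensorTensorTensorComm_tmul]
    | add u v hu hv => simp only [TensorProduct.add_tmul, map_add, hu, hv]
  exact key _

lemma cocycle' (hcoc : IsOneCocycle K H B π γ) (h g : H) :
    π (h * g) = (LinearMap.mul' K B ∘ₗ TensorProduct.map π (gcM γ (π g)))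
      (Coalgebra.comul (R := K) h) := by
  rw [hcoc.cocycle h g]
  have key : ∀ t : H ⊗[K] H,
      (LinearMap.mul' K B ∘ₗ TensorProduct.map π γ
        ∘ₗ (TensorProduct.assoc K H H B).toLinearMap)
        (t ⊗ₜ[K] π g)
      = (LinearMap.mul' K B ∘ₗ TensorProduct.map π (gcM γ (π g))) t := by
    intro t
    induction t using TensorProduct.induction_on with
    | zero => simp only [TensorProduct.zero_tmul, map_zero]
    | tmul x y => simp
    | add u v hu hv => simp only [TensorProduct.add_tmul, map_add, hu, hv]
  exact key _

lemma u_eq (hcoc : IsOneCocycle K H B π γ) :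
    uMap K H B (psiMap K H B π γ) = π := by
  ext h
  have r := Coalgebra.Repr.arbitrary K h
  calc uMap K H B (psiMap K H B π γ) h = psiMap K H B π γ (h ⊗ₜ[K] 1) := rfl
    _ = ∑ i ∈ r.index, π (r.left i) * γ (r.right i ⊗ₜ[K] (1 : B)) := psi_tmul π γ h 1 r
    _ = ∑ i ∈ r.index, Coalgebra.counit (R := K) (r.right i) • π (r.left i) := by
        refine Finset.sum_congr rfl fun i _ => ?_
        rw [hcoc.moduleAlgebra.act_one, mul_smul_comm, mul_one]
    _ = π (∑ i ∈ r.index, Coalgebra.counit (R := K) (r.right i) • r.left i) := by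
        simp [map_sum]
    _ = π h := by rw [sum_smul_counit_left h r]

lemma PhiMap_tmul (φ : H ⊗[K] B →ₗ[K] B) (h : H) (b : B) {ι : Type*} (r : Coalgebra.Repr K h ι) :
    PhiMap K H B φ (h ⊗ₜ[K] b) = ∑ i ∈ r.index,
      HopfAlgebra.antipode (R := K) (uMap K H B φ (r.left i)) * φ (r.right i ⊗ₜ[K] b) := by
  simp only [PhiMap, LinearMap.coe_comp, Function.comp_apply, LinearMap.rTensor_tmul,
    ← r.eq, TensorProduct.sum_tmul, map_sum]
  simp only [LinearEquiv.coe_coe, TensorProduct.assoc_tmul, TensorProduct.map_tmul,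
    LinearMap.mul'_apply, LinearMap.coe_comp, Function.comp_apply]

lemma phi_eq (hcoc : IsOneCocycle K H B π γ) :
    PhiMap K H B (psiMap K H B π γ) = γ := by
  apply TensorProduct.ext'
  intro h b
  have r := Coalgebra.Repr.arbitrary K h
  calc PhiMap K H B (psiMap K H B π γ) (h ⊗ₜ[K] b)
      = ∑ i ∈ r.index, HopfAlgebra.antipode (R := K) (π (r.left i))
          * psiMap K H B π γ (r.right i ⊗ₜ[K] b) := by
        rw [PhiMap_tmul _ h b r, u_eq hcoc]
    _ = ∑ i ∈ r.index, (HopfAlgebra.antipode (R := K) ∘ₗ π) (r.left i)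
          * LinearMap.mul' K B (TensorProduct.map π (gcM γ b)
              (Coalgebra.comul (R := K) (r.right i))) := by
        refine Finset.sum_congr rfl fun i _ => ?_
        rw [psi_tmul' π γ]
        rfl
    _ = Tl3 (HopfAlgebra.antipode (R := K) ∘ₗ π) π (gcM γ b) h :=
        (Tl3_apply _ _ _ h r).symm
    _ = Tr3 (HopfAlgebra.antipode (R := K) ∘ₗ π) π (gcM γ b) h := by
        rw [Tr3_eq_Tl3]
    _ = ∑ i ∈ r.index,
        LinearMap.mul' K B (TensorProduct.map (HopfAlgebra.antipode (R := K) ∘ₗ π) π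
          (Coalgebra.comul (R := K) (r.left i))) * γ (r.right i ⊗ₜ[K] b) :=
        Tr3_apply _ _ _ h r
    _ = ∑ i ∈ r.index, Coalgebra.counit (R := K) (r.left i) • γ (r.right i ⊗ₜ[K] b) := by
        refine Finset.sum_congr rfl fun i _ => ?_
        rw [antipode_pi hcoc, smul_mul_assoc, one_mul]
    _ = γ ((∑ i ∈ r.index, Coalgebra.counit (R := K) (r.left i) • r.right i) ⊗ₜ[K] b) := by
        rw [TensorProduct.sum_tmul, map_sum]
        simp only [← TensorProduct.smul_tmul', map_smul]
    _ = γ (h ⊗ₜ[K] b) := by rw [sum_counit_smul_right h r]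

lemma Tl3_psi (hγ : IsModuleAlgebra K H B γ) (h : H) (c d : B) :
    Tl3 π (gcM γ c) (gcM γ d) h = psiMap K H B π γ (h ⊗ₜ[K] (c * d)) := by
  have r := Coalgebra.Repr.arbitrary K h
  rw [Tl3_apply π (gcM γ c) (gcM γ d) h r, psi_tmul π γ h (c * d) r]
  refine Finset.sum_congr rfl fun i _ => ?_
  rw [gamma_act_mul hγ]
  rfl

/-- Product of two representations is a representation of the product. -/
def reprMul {h h' : H} {ι : Type*} (r : Coalgebra.Repr K h ι) {ι' : Type*} (r' : Coalgebra.Repr K h' ι') :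
    Coalgebra.Repr K (h * h') (ι × ι') where
  index := r.index ×ˢ r'.index
  left := fun p => r.left p.1 * r'.left p.2
  right := fun p => r.right p.1 * r'.right p.2
  eq := by
    rw [Finset.sum_product]
    rw [show CoalgebraStruct.comul (R := K) (h * h') = _ from Bialgebra.comul_mul h h']
    rw [show CoalgebraStruct.comul (R := K) h = _ from (r.eq).symm]
    rw [show CoalgebraStruct.comul (R := K) h' = _ from (r'.eq).symm]
    rw [Finset.sum_mul_sum]
    simp [Algebra.TensorProduct.tmul_mul_tmul]

lemma psi_one_act (hcoc : IsOneCocycle K H B π γ) (b : B) :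
    psiMap K H B π γ ((1 : H) ⊗ₜ[K] b) = b := by
  simp only [psiMap, LinearMap.coe_comp, Function.comp_apply, LinearMap.rTensor_tmul,
    Bialgebra.comul_one, Algebra.TensorProduct.one_def, LinearEquiv.coe_coe,
    TensorProduct.assoc_tmul, TensorProduct.map_tmul, LinearMap.mul'_apply,
    pi_one hcoc, hcoc.moduleAlgebra.one_act, one_mul]

lemma psi_mul_act (hcoc : IsOneCocycle K H B π γ) (h h' : H) (b : B) :
    psiMap K H B π γ ((h * h') ⊗ₜ[K] b)
      = psiMap K H B π γ (h ⊗ₜ[K] psiMap K H B π γ (h' ⊗ₜ[K] b)) := by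
  have hγ := hcoc.moduleAlgebra
  have r := Coalgebra.Repr.arbitrary K h
  have r' := Coalgebra.Repr.arbitrary K h'
  calc psiMap K H B π γ ((h * h') ⊗ₜ[K] b)
      = ∑ p ∈ r.index ×ˢ r'.index,
          π (r.left p.1 * r'.left p.2) * γ ((r.right p.1 * r'.right p.2) ⊗ₜ[K] b) :=
        psi_tmul π γ _ b (reprMul r r')
    _ = ∑ j ∈ r'.index, ∑ i ∈ r.index,
          LinearMap.mul' K B (TensorProduct.map π (gcM γ (π (r'.left j)))
            (Coalgebra.comul (R := K) (r.left i)))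
          * γ (r.right i ⊗ₜ[K] γ (r'.right j ⊗ₜ[K] b)) := by
        rw [Finset.sum_product, Finset.sum_comm]
        refine Finset.sum_congr rfl fun j _ => Finset.sum_congr rfl fun i _ => ?_
        rw [cocycle' hcoc, hγ.mul_act]
        rfl
    _ = ∑ j ∈ r'.index,
          Tr3 π (gcM γ (π (r'.left j))) (gcM γ (γ (r'.right j ⊗ₜ[K] b))) h := by
        refine Finset.sum_congr rfl fun j _ => ?_
        rw [Tr3_apply _ _ _ h r]
        rfl
    _ = ∑ j ∈ r'.index,
          Tl3 π (gcM γ (π (r'.left j))) (gcM γ (γ (r'.right j ⊗ₜ[K] b))) h :=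
        Finset.sum_congr rfl fun j _ => by rw [Tr3_eq_Tl3]
    _ = ∑ j ∈ r'.index,
          psiMap K H B π γ (h ⊗ₜ[K] (π (r'.left j) * γ (r'.right j ⊗ₜ[K] b))) :=
        Finset.sum_congr rfl fun j _ => Tl3_psi hγ h _ _
    _ = psiMap K H B π γ (h ⊗ₜ[K] psiMap K H B π γ (h' ⊗ₜ[K] b)) := by
        rw [psi_tmul π γ h' b r', TensorProduct.tmul_sum, map_sum]

lemma psi_compat (hcoc : IsOneCocycle K H B π γ) (h : H) (b b' : B) :
    psiMap K H B π γ (h ⊗ₜ[K] (b * b')) =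
      (LinearMap.mul' K B
        ∘ₗ TensorProduct.map (psiMap K H B π γ) (PhiMap K H B (psiMap K H B π γ))
        ∘ₗ (TensorProduct.tensorTensorTensorComm K H H B B).toLinearMap)
        ((Coalgebra.comul (R := K) h) ⊗ₜ[K] (b ⊗ₜ[K] b')) := by
  rw [phi_eq hcoc]
  have r := Coalgebra.Repr.arbitrary K h
  calc psiMap K H B π γ (h ⊗ₜ[K] (b * b'))
      = Tl3 π (gcM γ b) (gcM γ b') h := (Tl3_psi hcoc.moduleAlgebra h b b').symm
    _ = Tr3 π (gcM γ b) (gcM γ b') h := by rw [Tr3_eq_Tl3]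
    _ = ∑ i ∈ r.index,
          psiMap K H B π γ (r.left i ⊗ₜ[K] b) * γ (r.right i ⊗ₜ[K] b') := by
        rw [Tr3_apply _ _ _ h r]
        refine Finset.sum_congr rfl fun i _ => ?_
        rw [psi_tmul' π γ]
        rfl
    _ = (LinearMap.mul' K B
        ∘ₗ TensorProduct.map (psiMap K H B π γ) γ
        ∘ₗ (TensorProduct.tensorTensorTensorComm K H H B B).toLinearMap)
        ((Coalgebra.comul (R := K) h) ⊗ₜ[K] (b ⊗ₜ[K] b')) := by
        conv_rhs => rw [← r.eq]
        simp only [LinearMap.coe_comp, Function.comp_apply, TensorProduct.sum_tmul, map_sum]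
        simp only [LinearEquiv.coe_coe, TensorProduct.tensorTensorTensorComm_tmul,
          TensorProduct.map_tmul, LinearMap.mul'_apply]

end Aux

/-- A 1-cocycle `π : H → B` with action `γ` yields a Hopf bracoid `(H, B, ψ)` with
`ψ(h ⊗ b) = Σ π(h₍₁₎) · γ(h₍₂₎ ⊗ b)`; moreover `u_ψ = π` and `Φ_ψ = γ`. -/
theorem statement9 (π : H →ₗ[K] B) (γ : H ⊗[K] B →ₗ[K] B)
    (hcoc : IsOneCocycle K H B π γ) :
    IsHopfBracoid K H B (psiMap K H B π γ) ∧
    uMap K H B (psiMap K H B π γ) = π ∧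
    PhiMap K H B (psiMap K H B π γ) = γ :=
  ⟨⟨fun b => psi_one_act hcoc b, fun h h' b => psi_mul_act hcoc h h' b,
    fun h b b' => psi_compat hcoc h b b'⟩, u_eq hcoc, phi_eq hcoc⟩

end HopfBracoidPaper
end
end
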